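/- arXiv:1605.02336 — 4 statements merged into one kernel-verified Lean document; each statement's English description precedes it below -/
import Mathlib

section
/- Let n ∈ ℝ, k_n = n − 1, k₀ ∈ ℝ. On Ω = {r > 0}, the function J₁₂ = P₁ P₂ + 2(k₀/r^{2k_n}) cos(k_n φ) sin(k_n φ) is a constant of motion of the Hamiltonian H_na = T_n + k₀/r^{2k_n}: {J₁₂, H_na} = 0 at every point of Ω. (Together with J₁₁ and J₂₂ it forms the components of a Fradkin tensor, so H_na represents a harmonic oscillator with position dependent mass m_n = 1/r^{2n}.) -/
/-!
The Noether momenta `P₁, P₂` Poisson-commute with the kinetic energy `T_n`: both are instances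
of `rⁿ (p_r f(φ) + (p_φ / r) g(φ))` with `f' = -k_n g`, `g' = k_n f`, and any such function
commutes with `T_n`. By the Leibniz rule, `{P₁P₂, T_n + U}` therefore only sees the potential:
it equals `-rⁿ U'(r) (P₁ sin + P₂ cos)`, and this cancels `{U(r) sin(2k_n φ), T_n}` because
`U = k₀ / r^{2k_n}` satisfies `r U' = -2 k_n U`.
-/

open Real

/-- Canonical Poisson bracket on the phase space Ω ⊆ ℝ⁴ with coordinates (r, φ, p_r, p_φ):
{F,G} = F_r G_{p_r} − F_{p_r} G_r + F_φ G_{p_φ} − F_{p_φ} G_φ. -/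
noncomputable def pb (F G : ℝ → ℝ → ℝ → ℝ → ℝ) (r φ pr pφ : ℝ) : ℝ :=
  (deriv (fun x => F x φ pr pφ) r) * (deriv (fun x => G r φ x pφ) pr)
    - (deriv (fun x => F r φ x pφ) pr) * (deriv (fun x => G x φ pr pφ) r)
    + (deriv (fun x => F r x pr pφ) φ) * (deriv (fun x => G r φ pr x) pφ)
    - (deriv (fun x => F r φ pr x) pφ) * (deriv (fun x => G r x pr pφ) φ)

/-- Kinetic Hamiltonian T_n = (1/2) r^(2n) (p_r² + p_φ²/r²) of the
position dependent mass m_n = 1/r^(2n). -/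
noncomputable def Tkin (n : ℝ) (r φ pr pφ : ℝ) : ℝ :=
  (1/2) * r ^ (2*n) * (pr^2 + pφ^2 / r^2)

/-- Noether momentum P₁ = rⁿ (p_r cos(k_n φ) + (p_φ/r) sin(k_n φ)), k_n = n − 1. -/
noncomputable def P1 (n : ℝ) (r φ pr pφ : ℝ) : ℝ :=
  r ^ n * (pr * cos ((n-1)*φ) + (pφ / r) * sin ((n-1)*φ))

/-- Noether momentum P₂ = rⁿ (p_r sin(k_n φ) − (p_φ/r) cos(k_n φ)), k_n = n − 1. -/
noncomputable def P2 (n : ℝ) (r φ pr pφ : ℝ) : ℝ :=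
  r ^ n * (pr * sin ((n-1)*φ) - (pφ / r) * cos ((n-1)*φ))

/-- The Hamiltonian H_na = T_n + k₀/r^(2 k_n), k_n = n − 1. -/
noncomputable def Hna (n k0 : ℝ) (r φ pr pφ : ℝ) : ℝ :=
  Tkin n r φ pr pφ + k0 / r ^ (2*(n-1))

def PartiallyDifferentiableAt (F : ℝ → ℝ → ℝ → ℝ → ℝ) (r φ pr pφ : ℝ) : Prop :=
  DifferentiableAt ℝ (fun x => F x φ pr pφ) r ∧ DifferentiableAt ℝ (fun x => F r x pr pφ) φ ∧
    DifferentiableAt ℝ (fun x => F r φ x pφ) pr ∧ DifferentiableAt ℝ (fun x => F r φ pr x) pφ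

section PoissonBracket

variable {F G H : ℝ → ℝ → ℝ → ℝ → ℝ} {r φ pr pφ : ℝ}

theorem PartiallyDifferentiableAt.mul (hF : PartiallyDifferentiableAt F r φ pr pφ)
    (hG : PartiallyDifferentiableAt G r φ pr pφ) :
    PartiallyDifferentiableAt (fun r φ pr pφ => F r φ pr pφ * G r φ pr pφ) r φ pr pφ :=
  ⟨hF.1.mul hG.1, hF.2.1.mul hG.2.1, hF.2.2.1.mul hG.2.2.1, hF.2.2.2.mul hG.2.2.2⟩

theorem pb_add_left (hF : PartiallyDifferentiableAt F r φ pr pφ)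
    (hG : PartiallyDifferentiableAt G r φ pr pφ) :
    pb (fun r φ pr pφ => F r φ pr pφ + G r φ pr pφ) H r φ pr pφ
      = pb F H r φ pr pφ + pb G H r φ pr pφ := by
  simp only [pb]
  rw [deriv_fun_add hF.1 hG.1, deriv_fun_add hF.2.1 hG.2.1, deriv_fun_add hF.2.2.1 hG.2.2.1,
    deriv_fun_add hF.2.2.2 hG.2.2.2]
  ring

theorem pb_add_right (hG : PartiallyDifferentiableAt G r φ pr pφ)
    (hH : PartiallyDifferentiableAt H r φ pr pφ) :
    pb F (fun r φ pr pφ => G r φ pr pφ + H r φ pr pφ) r φ pr pφ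
      = pb F G r φ pr pφ + pb F H r φ pr pφ := by
  simp only [pb]
  rw [deriv_fun_add hG.1 hH.1, deriv_fun_add hG.2.1 hH.2.1, deriv_fun_add hG.2.2.1 hH.2.2.1,
    deriv_fun_add hG.2.2.2 hH.2.2.2]
  ring

theorem pb_mul_left (hF : PartiallyDifferentiableAt F r φ pr pφ)
    (hG : PartiallyDifferentiableAt G r φ pr pφ) :
    pb (fun r φ pr pφ => F r φ pr pφ * G r φ pr pφ) H r φ pr pφ
      = F r φ pr pφ * pb G H r φ pr pφ + G r φ pr pφ * pb F H r φ pr pφ := by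
  simp only [pb]
  rw [deriv_fun_mul hF.1 hG.1, deriv_fun_mul hF.2.1 hG.2.1, deriv_fun_mul hF.2.2.1 hG.2.2.1,
    deriv_fun_mul hF.2.2.2 hG.2.2.2]
  ring

theorem pb_eq_zero_of_momentum_independent (F G : ℝ → ℝ → ℝ) :
    pb (fun r φ _ _ => F r φ) (fun r φ _ _ => G r φ) r φ pr pφ = 0 := by
  simp [pb]

end PoissonBracket

noncomputable def noetherMomentum (n : ℝ) (f g : ℝ → ℝ) (r φ pr pφ : ℝ) : ℝ :=
  r ^ n * (pr * f φ + pφ / r * g φ)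

section

variable {n r φ pr pφ : ℝ} {f g U : ℝ → ℝ}

theorem hasDerivAt_noetherMomentum_r (hr : r ≠ 0) :
    HasDerivAt (fun x => noetherMomentum n f g x φ pr pφ)
      (r ^ n * (n * pr * f φ + (n - 1) * (pφ / r) * g φ) / r) r := by
  refine ((hasDerivAt_rpow_const (p := n) (Or.inl hr)).mul
    ((((hasDerivAt_const r pφ).div (hasDerivAt_id r) hr).mul_const (g φ)).const_add
      (pr * f φ))).congr_deriv ?_
  simp only [Pi.div_apply, id, rpow_sub_one hr]
  field_simp
  ring

theorem hasDerivAt_noetherMomentum_φ {f' g' : ℝ} (hf : HasDerivAt f f' φ)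
    (hg : HasDerivAt g g' φ) :
    HasDerivAt (fun x => noetherMomentum n f g r x pr pφ)
      (r ^ n * (pr * f' + pφ / r * g')) φ :=
  ((hf.const_mul pr).add (hg.const_mul (pφ / r))).const_mul (r ^ n)

theorem hasDerivAt_noetherMomentum_pr :
    HasDerivAt (fun x => noetherMomentum n f g r φ x pφ) (r ^ n * f φ) pr :=
  ((((hasDerivAt_id pr).mul_const (f φ)).add_const (pφ / r * g φ)).const_mul
    (r ^ n)).congr_deriv (by simp)

theorem hasDerivAt_noetherMomentum_pφ :
    HasDerivAt (fun x => noetherMomentum n f g r φ pr x) (r ^ n * (g φ / r)) pφ :=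
  (((((hasDerivAt_id pφ).div_const r).mul_const (g φ)).const_add (pr * f φ)).const_mul
    (r ^ n)).congr_deriv (by ring)

theorem hasDerivAt_Tkin_r (hr : r ≠ 0) :
    HasDerivAt (fun x => Tkin n x φ pr pφ)
      (r ^ (2 * n) * (n * pr ^ 2 + (n - 1) * pφ ^ 2 / r ^ 2) / r) r := by
  refine (((hasDerivAt_rpow_const (p := 2 * n) (Or.inl hr)).const_mul (1 / 2)).mul
    (((hasDerivAt_const r (pφ ^ 2)).div (hasDerivAt_pow 2 r) (pow_ne_zero 2 hr)).const_add
      (pr ^ 2))).congr_deriv ?_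
  simp only [Pi.div_apply, rpow_sub_one hr]
  field_simp
  ring

theorem hasDerivAt_Tkin_pr : HasDerivAt (fun x => Tkin n r φ x pφ) (r ^ (2 * n) * pr) pr :=
  (((hasDerivAt_pow 2 pr).add_const (pφ ^ 2 / r ^ 2)).const_mul
    (1 / 2 * r ^ (2 * n))).congr_deriv (by ring)

theorem hasDerivAt_Tkin_pφ :
    HasDerivAt (fun x => Tkin n r φ pr x) (r ^ (2 * n) * (pφ / r ^ 2)) pφ :=
  ((((hasDerivAt_pow 2 pφ).div_const (r ^ 2)).const_add (pr ^ 2)).const_mul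
    (1 / 2 * r ^ (2 * n))).congr_deriv (by ring)

theorem deriv_Tkin_φ : deriv (fun x => Tkin n r x pr pφ) φ = 0 :=
  deriv_const φ _

theorem hasDerivAt_const_div_rpow (hr : 0 < r) (k a : ℝ) :
    HasDerivAt (fun x => k / x ^ a) (-a * (k / r ^ a) / r) r := by
  have hra : r ^ a ≠ 0 := (rpow_pos_of_pos hr a).ne'
  refine ((hasDerivAt_const r k).div (hasDerivAt_rpow_const (p := a) (Or.inl hr.ne'))
    hra).congr_deriv ?_
  rw [rpow_sub_one hr.ne']
  field_simp
  ring

theorem noetherMomentum_partiallyDifferentiableAt (hr : r ≠ 0) (hf : DifferentiableAt ℝ f φ)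
    (hg : DifferentiableAt ℝ g φ) :
    PartiallyDifferentiableAt (noetherMomentum n f g) r φ pr pφ :=
  ⟨(hasDerivAt_noetherMomentum_r hr).differentiableAt,
    (hasDerivAt_noetherMomentum_φ hf.hasDerivAt hg.hasDerivAt).differentiableAt,
    hasDerivAt_noetherMomentum_pr.differentiableAt, hasDerivAt_noetherMomentum_pφ.differentiableAt⟩

theorem Tkin_partiallyDifferentiableAt (hr : r ≠ 0) :
    PartiallyDifferentiableAt (Tkin n) r φ pr pφ :=
  ⟨(hasDerivAt_Tkin_r hr).differentiableAt, differentiableAt_const _,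
    hasDerivAt_Tkin_pr.differentiableAt, hasDerivAt_Tkin_pφ.differentiableAt⟩

theorem radial_partiallyDifferentiableAt (hU : DifferentiableAt ℝ U r) :
    PartiallyDifferentiableAt (fun r _ _ _ => U r) r φ pr pφ :=
  ⟨hU, differentiableAt_const _, differentiableAt_const _, differentiableAt_const _⟩

theorem radial_mul_angular_partiallyDifferentiableAt {h : ℝ → ℝ} (hU : DifferentiableAt ℝ U r)
    (hh : DifferentiableAt ℝ h φ) :
    PartiallyDifferentiableAt (fun r φ _ _ => U r * h φ) r φ pr pφ :=
  ⟨hU.mul_const _, hh.const_mul _, differentiableAt_const _, differentiableAt_const _⟩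

theorem pb_noetherMomentum_Tkin (hr : r ≠ 0) (hf : HasDerivAt f (-(n - 1) * g φ) φ)
    (hg : HasDerivAt g ((n - 1) * f φ) φ) :
    pb (noetherMomentum n f g) (Tkin n) r φ pr pφ = 0 := by
  simp only [pb]
  rw [(hasDerivAt_noetherMomentum_r hr).deriv, (hasDerivAt_noetherMomentum_φ hf hg).deriv,
    hasDerivAt_noetherMomentum_pr.deriv, hasDerivAt_noetherMomentum_pφ.deriv,
    (hasDerivAt_Tkin_r hr).deriv, hasDerivAt_Tkin_pr.deriv, hasDerivAt_Tkin_pφ.deriv, deriv_Tkin_φ]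
  field_simp
  ring

theorem pb_noetherMomentum_radial :
    pb (noetherMomentum n f g) (fun r _ _ _ => U r) r φ pr pφ = -(r ^ n * f φ * deriv U r) := by
  simp only [pb, hasDerivAt_noetherMomentum_pr.deriv, deriv_const]
  ring

theorem pb_noetherMomentum_Tkin_add_radial (hr : r ≠ 0) (hf : HasDerivAt f (-(n - 1) * g φ) φ)
    (hg : HasDerivAt g ((n - 1) * f φ) φ) (hU : DifferentiableAt ℝ U r) :
    pb (noetherMomentum n f g) (fun r φ pr pφ => Tkin n r φ pr pφ + U r) r φ pr pφ
      = -(r ^ n * f φ * deriv U r) := by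
  rw [pb_add_right (Tkin_partiallyDifferentiableAt hr) (radial_partiallyDifferentiableAt hU),
    pb_noetherMomentum_Tkin hr hf hg, pb_noetherMomentum_radial, zero_add]

theorem pb_radial_mul_angular_Tkin_add_radial {h : ℝ → ℝ} {U' h' : ℝ} (hr : r ≠ 0)
    (hU : HasDerivAt U U' r) (hh : HasDerivAt h h' φ) :
    pb (fun r φ _ _ => U r * h φ) (fun r φ pr pφ => Tkin n r φ pr pφ + U r) r φ pr pφ
      = r ^ (2 * n) * (U' * h φ * pr + U r * h' * (pφ / r ^ 2)) := by
  rw [pb_add_right (Tkin_partiallyDifferentiableAt hr)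
    (radial_partiallyDifferentiableAt hU.differentiableAt),
    pb_eq_zero_of_momentum_independent (fun r φ => U r * h φ) (fun r _ => U r), add_zero]
  simp only [pb, (hU.mul_const (h φ)).deriv, (hh.const_mul (U r)).deriv, deriv_const,
    hasDerivAt_Tkin_pr.deriv, hasDerivAt_Tkin_pφ.deriv]
  ring

theorem pb_noetherMomentum_mul_add_radial_eq_zero {c s : ℝ → ℝ} (hr : 0 < r)
    (hc : HasDerivAt c (-(n - 1) * s φ) φ) (hs : HasDerivAt s ((n - 1) * c φ) φ)
    (hU : HasDerivAt U (-(2 * (n - 1)) * U r / r) r) :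
    pb (fun r φ pr pφ => noetherMomentum n c s r φ pr pφ * noetherMomentum n s (-c) r φ pr pφ
        + U r * (2 * (c φ * s φ)))
      (fun r φ pr pφ => Tkin n r φ pr pφ + U r) r φ pr pφ = 0 := by
  have hs' : HasDerivAt s (-(n - 1) * (-c) φ) φ := hs.congr_deriv (by rw [Pi.neg_apply]; ring)
  have hc' : HasDerivAt (-c) ((n - 1) * s φ) φ := hc.neg.congr_deriv (by ring)
  have hcs : HasDerivAt (fun φ => 2 * (c φ * s φ)) (2 * (n - 1) * (c φ ^ 2 - s φ ^ 2)) φ :=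
    ((hc.mul hs).const_mul 2).congr_deriv (by ring)
  have hP₁ := noetherMomentum_partiallyDifferentiableAt (n := n) (pr := pr) (pφ := pφ) hr.ne'
    hc.differentiableAt hs.differentiableAt
  have hP₂ := noetherMomentum_partiallyDifferentiableAt (n := n) (pr := pr) (pφ := pφ) hr.ne'
    hs.differentiableAt hc'.differentiableAt
  rw [pb_add_left (hP₁.mul hP₂)
      (radial_mul_angular_partiallyDifferentiableAt hU.differentiableAt hcs.differentiableAt),
    pb_mul_left hP₁ hP₂, pb_noetherMomentum_Tkin_add_radial hr.ne' hc hs hU.differentiableAt,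
    pb_noetherMomentum_Tkin_add_radial hr.ne' hs' hc' hU.differentiableAt,
    pb_radial_mul_angular_Tkin_add_radial hr.ne' hU hcs, hU.deriv, two_mul n, rpow_add hr]
  simp only [noetherMomentum, Pi.neg_apply]
  field_simp
  ring

end

/-- The Fradkin-tensor component J₁₂ = P₁P₂ + 2(k₀/r^(2k_n)) cos(k_n φ) sin(k_n φ)
is a constant of motion of H_na on Ω = {r > 0}. -/
theorem J12_constant_of_motion (n k0 : ℝ) :
    ∀ r φ pr pφ : ℝ, 0 < r →
      pb (fun r φ pr pφ => P1 n r φ pr pφ * P2 n r φ pr pφ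
            + 2 * (k0 / r ^ (2*(n-1))) * cos ((n-1)*φ) * sin ((n-1)*φ))
         (Hna n k0) r φ pr pφ = 0 := by
  intro r φ pr pφ hr
  set c : ℝ → ℝ := fun φ => cos ((n - 1) * φ)
  set s : ℝ → ℝ := fun φ => sin ((n - 1) * φ)
  set U : ℝ → ℝ := fun x => k0 / x ^ (2 * (n - 1))
  have hc : HasDerivAt c (-(n - 1) * s φ) φ :=
    ((hasDerivAt_id φ).const_mul (n - 1)).cos.congr_deriv (by simp only [id, mul_one, s]; ring)
  have hs : HasDerivAt s ((n - 1) * c φ) φ :=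
    ((hasDerivAt_id φ).const_mul (n - 1)).sin.congr_deriv (by simp only [id, mul_one, c]; ring)
  have hU : HasDerivAt U (-(2 * (n - 1)) * U r / r) r := hasDerivAt_const_div_rpow hr k0 _
  have hJ : (fun r φ pr pφ => P1 n r φ pr pφ * P2 n r φ pr pφ
      + 2 * (k0 / r ^ (2*(n-1))) * cos ((n-1)*φ) * sin ((n-1)*φ))
      = fun r φ pr pφ => noetherMomentum n c s r φ pr pφ * noetherMomentum n s (-c) r φ pr pφ
        + U r * (2 * (c φ * s φ)) := by
    funext r φ pr pφ
    simp only [P1, P2, noetherMomentum, c, s, U, Pi.neg_apply]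
    ring
  rw [hJ]
  exact pb_noetherMomentum_mul_add_radial_eq_zero hr hc hs hU
end

section
/- Let n ∈ ℝ, k_n = n − 1, and k₀, k₁, k₂ ∈ ℝ. Consider the Hamiltonian H_na' = T_n + k₀/r^{2k_n} + (1/r^{k_n})(k₁ cos(k_n φ) + k₂ sin(k_n φ)) on Ω = {r > 0}. Then the function J_a3' = 2k₀ p_φ + k₂ P₁ − k₁ P₂, which is linear in the momenta, is a constant of motion: {J_a3', H_na'} = 0 at every point of Ω. -/
open Real

/-- The Hamiltonian H_na' = T_n + k₀/r^(2k_n) + (1/r^(k_n))(k₁ cos(k_n φ) + k₂ sin(k_n φ)). -/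
noncomputable def Hnap (n k0 k1 k2 : ℝ) (r φ pr pφ : ℝ) : ℝ :=
  Tkin n r φ pr pφ + k0 / r ^ (2*(n-1))
    + (1 / r ^ (n-1)) * (k1 * cos ((n-1)*φ) + k2 * sin ((n-1)*φ))

/-! The bracket depends on `J` and `H` only through their eight partial derivatives, so it
suffices to compute those of the building blocks `pφ`, `P₁`, `P₂`, `T_n` and the two potential
terms. Writing every power of `r` through `a = rⁿ` (`r^(2n) = a²`, `r^(n-1) = a / r`), the bracket
becomes a rational identity in `r`, `a`, `cos (k_n φ)`, `sin (k_n φ)`. -/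

def HasPartialsAt (F : ℝ → ℝ → ℝ → ℝ → ℝ) (Fr Fφ Fpr Fpφ r φ pr pφ : ℝ) : Prop :=
  HasDerivAt (F · φ pr pφ) Fr r ∧ HasDerivAt (F r · pr pφ) Fφ φ ∧
    HasDerivAt (F r φ · pφ) Fpr pr ∧ HasDerivAt (F r φ pr ·) Fpφ pφ

namespace HasPartialsAt

variable {F G : ℝ → ℝ → ℝ → ℝ → ℝ} {Fr Fφ Fpr Fpφ Gr Gφ Gpr Gpφ r φ pr pφ : ℝ}

theorem pb_eq (hF : HasPartialsAt F Fr Fφ Fpr Fpφ r φ pr pφ)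
    (hG : HasPartialsAt G Gr Gφ Gpr Gpφ r φ pr pφ) :
    pb F G r φ pr pφ = Fr * Gpr - Fpr * Gr + Fφ * Gpφ - Fpφ * Gφ := by
  obtain ⟨hFr, hFφ, hFpr, hFpφ⟩ := hF
  obtain ⟨hGr, hGφ, hGpr, hGpφ⟩ := hG
  rw [pb, hFr.deriv, hFφ.deriv, hFpr.deriv, hFpφ.deriv, hGr.deriv, hGφ.deriv, hGpr.deriv,
    hGpφ.deriv]

theorem add (hF : HasPartialsAt F Fr Fφ Fpr Fpφ r φ pr pφ)
    (hG : HasPartialsAt G Gr Gφ Gpr Gpφ r φ pr pφ) :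
    HasPartialsAt (fun r φ pr pφ => F r φ pr pφ + G r φ pr pφ)
      (Fr + Gr) (Fφ + Gφ) (Fpr + Gpr) (Fpφ + Gpφ) r φ pr pφ :=
  ⟨hF.1.add hG.1, hF.2.1.add hG.2.1, hF.2.2.1.add hG.2.2.1, hF.2.2.2.add hG.2.2.2⟩

theorem sub (hF : HasPartialsAt F Fr Fφ Fpr Fpφ r φ pr pφ)
    (hG : HasPartialsAt G Gr Gφ Gpr Gpφ r φ pr pφ) :
    HasPartialsAt (fun r φ pr pφ => F r φ pr pφ - G r φ pr pφ)
      (Fr - Gr) (Fφ - Gφ) (Fpr - Gpr) (Fpφ - Gpφ) r φ pr pφ :=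
  ⟨hF.1.sub hG.1, hF.2.1.sub hG.2.1, hF.2.2.1.sub hG.2.2.1, hF.2.2.2.sub hG.2.2.2⟩

theorem const_mul (c : ℝ) (hF : HasPartialsAt F Fr Fφ Fpr Fpφ r φ pr pφ) :
    HasPartialsAt (fun r φ pr pφ => c * F r φ pr pφ)
      (c * Fr) (c * Fφ) (c * Fpr) (c * Fpφ) r φ pr pφ :=
  ⟨hF.1.const_mul c, hF.2.1.const_mul c, hF.2.2.1.const_mul c, hF.2.2.2.const_mul c⟩

end HasPartialsAt

section Partials

variable {r φ pr pφ : ℝ}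

theorem hasPartialsAt_pφ : HasPartialsAt (fun _ _ _ pφ => pφ) 0 0 0 1 r φ pr pφ :=
  ⟨hasDerivAt_const r pφ, hasDerivAt_const φ pφ, hasDerivAt_const pr pφ, hasDerivAt_id pφ⟩

theorem hasDerivAt_rpow_const_of_ne_zero (hr : r ≠ 0) (p : ℝ) :
    HasDerivAt (fun x => x ^ p) (p * (r ^ p / r)) r := by
  simpa [rpow_sub_one hr] using hasDerivAt_rpow_const (p := p) (Or.inl hr)

theorem hasPartialsAt_P1 (n : ℝ) (hr : r ≠ 0) :
    HasPartialsAt (P1 n)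
      (r ^ n / r * (n * pr * cos ((n-1)*φ) + (n - 1) * (pφ / r) * sin ((n-1)*φ)))
      (-(n - 1) * P2 n r φ pr pφ) (r ^ n * cos ((n-1)*φ)) (r ^ n / r * sin ((n-1)*φ))
      r φ pr pφ := by
  have hφ : HasDerivAt (fun x => (n - 1) * x) (n - 1) φ := hasDerivAt_const_mul _
  refine ⟨?_, ?_, ?_, ?_⟩
  · refine ((hasDerivAt_rpow_const_of_ne_zero hr n).mul
      ((((hasDerivAt_const r pφ).div (hasDerivAt_id r) hr).mul_const _).const_add _))
      |>.congr_deriv ?_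
    simp only [Pi.div_apply, id]
    field_simp
    ring
  · refine (((hφ.cos.const_mul pr).add (hφ.sin.const_mul (pφ / r))).const_mul
      (r ^ n)).congr_deriv ?_
    simp only [P2]
    ring
  · exact ((((hasDerivAt_id pr).mul_const _).add_const _).const_mul (r ^ n)).congr_deriv
      (by ring)
  · exact ((((hasDerivAt_id pφ).div_const r).mul_const _).const_add _).const_mul (r ^ n)
      |>.congr_deriv (by ring)

theorem hasPartialsAt_P2 (n : ℝ) (hr : r ≠ 0) :
    HasPartialsAt (P2 n)
      (r ^ n / r * (n * pr * sin ((n-1)*φ) - (n - 1) * (pφ / r) * cos ((n-1)*φ)))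
      ((n - 1) * P1 n r φ pr pφ) (r ^ n * sin ((n-1)*φ)) (-(r ^ n / r * cos ((n-1)*φ)))
      r φ pr pφ := by
  have hφ : HasDerivAt (fun x => (n - 1) * x) (n - 1) φ := hasDerivAt_const_mul _
  refine ⟨?_, ?_, ?_, ?_⟩
  · refine ((hasDerivAt_rpow_const_of_ne_zero hr n).mul
      ((((hasDerivAt_const r pφ).div (hasDerivAt_id r) hr).mul_const _).const_sub _))
      |>.congr_deriv ?_
    simp only [Pi.div_apply, id]
    field_simp
    ring
  · refine (((hφ.sin.const_mul pr).sub (hφ.cos.const_mul (pφ / r))).const_mul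
      (r ^ n)).congr_deriv ?_
    simp only [P1]
    ring
  · exact ((((hasDerivAt_id pr).mul_const _).sub_const _).const_mul (r ^ n)).congr_deriv
      (by ring)
  · exact ((((hasDerivAt_id pφ).div_const r).mul_const _).const_sub _).const_mul (r ^ n)
      |>.congr_deriv (by ring)

theorem rpow_two_mul_eq_sq (hr : 0 ≤ r) (y : ℝ) : r ^ (2 * y) = (r ^ y) ^ 2 := by
  simpa [mul_comm] using rpow_mul_natCast hr y 2

theorem hasPartialsAt_Tkin (n : ℝ) (hr : 0 < r) :
    HasPartialsAt (Tkin n)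
      ((r ^ n) ^ 2 / r * (n * pr ^ 2 + (n - 1) * pφ ^ 2 / r ^ 2)) 0
      ((r ^ n) ^ 2 * pr) ((r ^ n) ^ 2 * pφ / r ^ 2) r φ pr pφ := by
  have h2n := rpow_two_mul_eq_sq hr.le n
  refine ⟨?_, hasDerivAt_const φ _, ?_, ?_⟩
  · refine (((hasDerivAt_rpow_const_of_ne_zero hr.ne' (2 * n)).const_mul (1 / 2)).mul
      (((hasDerivAt_const r (pφ ^ 2)).div (hasDerivAt_pow 2 r)
        (pow_ne_zero 2 hr.ne')).const_add (pr ^ 2))).congr_deriv ?_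
    simp only [Pi.div_apply, h2n]
    field_simp
    ring
  · exact (((hasDerivAt_pow 2 pr).add_const _).const_mul _).congr_deriv (by rw [h2n]; ring)
  · exact ((((hasDerivAt_pow 2 pφ).div_const _).const_add _).const_mul _).congr_deriv
      (by rw [h2n]; ring)

theorem hasPartialsAt_radial_potential (n k0 : ℝ) (hr : 0 < r) :
    HasPartialsAt (fun r _ _ _ => k0 / r ^ (2 * (n - 1)))
      (-(2 * (n - 1) * k0 * r / (r ^ n) ^ 2)) 0 0 0 r φ pr pφ := by
  refine ⟨?_, hasDerivAt_const φ _, hasDerivAt_const pr _, hasDerivAt_const pφ _⟩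
  refine ((hasDerivAt_const r k0).div (hasDerivAt_rpow_const_of_ne_zero hr.ne' _)
    (rpow_pos_of_pos hr _).ne').congr_deriv ?_
  rw [rpow_two_mul_eq_sq hr.le, rpow_sub_one hr.ne']
  field_simp
  ring

theorem hasPartialsAt_angular_potential (n k1 k2 : ℝ) (hr : 0 < r) :
    HasPartialsAt (fun r φ _ _ => 1 / r ^ (n - 1) * (k1 * cos ((n-1)*φ) + k2 * sin ((n-1)*φ)))
      (-((n - 1) / r ^ n * (k1 * cos ((n-1)*φ) + k2 * sin ((n-1)*φ))))
      (r / r ^ n * (n - 1) * (k2 * cos ((n-1)*φ) - k1 * sin ((n-1)*φ))) 0 0 r φ pr pφ := by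
  have hφ : HasDerivAt (fun x => (n - 1) * x) (n - 1) φ := hasDerivAt_const_mul _
  refine ⟨?_, ?_, hasDerivAt_const pr _, hasDerivAt_const pφ _⟩
  · refine (((hasDerivAt_const r 1).div (hasDerivAt_rpow_const_of_ne_zero hr.ne' _)
      (rpow_pos_of_pos hr _).ne').mul_const _).congr_deriv ?_
    rw [rpow_sub_one hr.ne']
    field_simp
    ring
  · refine (((hφ.cos.const_mul k1).add (hφ.sin.const_mul k2)).const_mul _).congr_deriv ?_
    rw [rpow_sub_one hr.ne']
    field_simp
    ring

theorem hasPartialsAt_Hnap (n k0 k1 k2 : ℝ) (hr : 0 < r) :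
    HasPartialsAt (Hnap n k0 k1 k2)
      ((r ^ n) ^ 2 / r * (n * pr ^ 2 + (n - 1) * pφ ^ 2 / r ^ 2)
        - 2 * (n - 1) * k0 * r / (r ^ n) ^ 2
        - (n - 1) / r ^ n * (k1 * cos ((n-1)*φ) + k2 * sin ((n-1)*φ)))
      (r / r ^ n * (n - 1) * (k2 * cos ((n-1)*φ) - k1 * sin ((n-1)*φ)))
      ((r ^ n) ^ 2 * pr) ((r ^ n) ^ 2 * pφ / r ^ 2) r φ pr pφ := by
  have h := ((hasPartialsAt_Tkin n (φ := φ) (pr := pr) (pφ := pφ) hr).add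
    (hasPartialsAt_radial_potential n k0 hr)).add (hasPartialsAt_angular_potential n k1 k2 hr)
  simp only [add_zero, zero_add, ← sub_eq_add_neg] at h
  exact h

end Partials

/-- The function J_a3' = 2k₀ p_φ + k₂ P₁ − k₁ P₂, linear in the momenta, is a
constant of motion of H_na' on Ω = {r > 0}. -/
theorem Ja3p_constant_of_motion (n k0 k1 k2 : ℝ) :
    ∀ r φ pr pφ : ℝ, 0 < r →
      pb (fun r φ pr pφ => 2 * k0 * pφ + k2 * P1 n r φ pr pφ - k1 * P2 n r φ pr pφ)
         (Hnap n k0 k1 k2) r φ pr pφ = 0 := by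
  intro r φ pr pφ hr
  have hJ : HasPartialsAt _ _ _ _ _ r φ pr pφ := ((hasPartialsAt_pφ.const_mul (2 * k0)).add
    ((hasPartialsAt_P1 n hr.ne').const_mul k2)).sub ((hasPartialsAt_P2 n hr.ne').const_mul k1)
  rw [hJ.pb_eq (hasPartialsAt_Hnap n k0 k1 k2 hr), P1, P2]
  field_simp
  ring
end

section
/- Let n ∈ ℝ, k_n = n − 1, and k₀, k₁, k₂ ∈ ℝ. Consider the Hamiltonian H_nb = T_n + (k₀/r^{2k_n})(cos²(k_n φ) + 4 sin²(k_n φ)) + r^{2k_n} k₁/cos²(k_n φ) + (k₂/r^{k_n}) sin(k_n φ), defined on the open subset of Ω = {r > 0} where cos(k_n φ) ≠ 0. Then the function J_b3 = P₁ p_φ − (k₀/r^{3k_n}) cos(k_n φ) sin(2k_n φ) + k₁ r^{k_n} sec³(k_n φ) sin(2k_n φ) − (k₂/(2 r^{2k_n})) cos²(k_n φ) is a constant of motion: {J_b3, H_nb} = 0 at every point of that open set. -/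
/-! Writing `ρ = r ^ (n-1)`, `c = cos ((n-1) φ)` and `s = sin ((n-1) φ)`, every power of `r`
occurring in the eight partial derivatives is a monomial in `r` and `ρ` (`r ^ n = ρ r`,
`r ^ (2n) = ρ² r²`, …) and the double angles are polynomials in `c`, `s`. The bracket
`{J_b3, H_nb}` thereby becomes a rational function of `r, ρ, c, s, p_r, p_φ` which vanishes
identically; not even `c² + s² = 1` is needed. -/

open Real

/-- The Hamiltonian H_nb = T_n + U_nb with
U_nb = (k₀/r^(2k_n))(cos²(k_n φ) + 4 sin²(k_n φ)) + r^(2k_n) k₁/cos²(k_n φ)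
      + (k₂/r^(k_n)) sin(k_n φ). -/
noncomputable def Hnb (n k0 k1 k2 : ℝ) (r φ pr pφ : ℝ) : ℝ :=
  Tkin n r φ pr pφ
    + (k0 / r ^ (2*(n-1))) * ((cos ((n-1)*φ))^2 + 4 * (sin ((n-1)*φ))^2)
    + r ^ (2*(n-1)) * k1 / (cos ((n-1)*φ))^2
    + (k2 / r ^ (n-1)) * sin ((n-1)*φ)

namespace Real

theorem rpow_ofNat_mul {r : ℝ} (hr : 0 ≤ r) (m : ℕ) [m.AtLeastTwo] (a : ℝ) :
    r ^ ((OfNat.ofNat m : ℝ) * a) = (r ^ a) ^ (OfNat.ofNat m : ℕ) := by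
  rw [mul_comm, rpow_mul hr, rpow_ofNat]

theorem rpow_eq_rpow_sub_one_mul {r : ℝ} (hr : r ≠ 0) (a : ℝ) : r ^ a = r ^ (a - 1) * r := by
  rw [rpow_sub_one hr]
  field_simp

theorem hasDerivAt_rpow_const_of_pos {r : ℝ} (hr : 0 < r) (a : ℝ) :
    HasDerivAt (fun x : ℝ => x ^ a) (a * r ^ a / r) r := by
  simpa [rpow_sub_one hr.ne', mul_div_assoc] using hasDerivAt_rpow_const (p := a) (Or.inl hr.ne')

end Real

theorem pb_eq_of_hasDerivAt {F G : ℝ → ℝ → ℝ → ℝ → ℝ}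
    {r φ pr pφ Fr Fφ Fpr Fpφ Gr Gφ Gpr Gpφ : ℝ}
    (hFr : HasDerivAt (fun x => F x φ pr pφ) Fr r)
    (hFφ : HasDerivAt (fun x => F r x pr pφ) Fφ φ)
    (hFpr : HasDerivAt (fun x => F r φ x pφ) Fpr pr)
    (hFpφ : HasDerivAt (fun x => F r φ pr x) Fpφ pφ)
    (hGr : HasDerivAt (fun x => G x φ pr pφ) Gr r)
    (hGφ : HasDerivAt (fun x => G r x pr pφ) Gφ φ)
    (hGpr : HasDerivAt (fun x => G r φ x pφ) Gpr pr)
    (hGpφ : HasDerivAt (fun x => G r φ pr x) Gpφ pφ) :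
    pb F G r φ pr pφ = Fr * Gpr - Fpr * Gr + Fφ * Gpφ - Fpφ * Gφ := by
  rw [pb, hFr.deriv, hFφ.deriv, hFpr.deriv, hFpφ.deriv, hGr.deriv, hGφ.deriv, hGpr.deriv,
    hGpφ.deriv]

noncomputable def Jb3 (n k0 k1 k2 : ℝ) (r φ pr pφ : ℝ) : ℝ :=
  P1 n r φ pr pφ * pφ
    - (k0 / r ^ (3*(n-1))) * cos ((n-1)*φ) * sin (2*(n-1)*φ)
    + k1 * r ^ (n-1) * (1 / cos ((n-1)*φ))^3 * sin (2*(n-1)*φ)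
    - (k2 / (2 * r ^ (2*(n-1)))) * (cos ((n-1)*φ))^2

section PartialDerivatives

variable {n k0 k1 k2 r φ pr pφ : ℝ}

theorem hasDerivAt_Jb3_r (hr : 0 < r) :
    HasDerivAt (fun x => Jb3 n k0 k1 k2 x φ pr pφ)
      (n * r ^ n / r * (pr * cos ((n-1)*φ) + pφ / r * sin ((n-1)*φ)) * pφ
        - r ^ n * pφ ^ 2 / r ^ 2 * sin ((n-1)*φ)
        + 3 * (n-1) * k0 * cos ((n-1)*φ) * sin (2*(n-1)*φ) / (r * r ^ (3*(n-1)))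
        + (n-1) * k1 * r ^ (n-1) / r * (1 / cos ((n-1)*φ)) ^ 3 * sin (2*(n-1)*φ)
        + (n-1) * k2 * cos ((n-1)*φ) ^ 2 / (r * r ^ (2*(n-1)))) r := by
  have hP := ((hasDerivAt_rpow_const_of_pos hr n).mul
    ((hasDerivAt_const r (pr * cos ((n-1)*φ))).add (((hasDerivAt_const r pφ).div
      (hasDerivAt_id' r) hr.ne').mul_const (sin ((n-1)*φ))))).mul_const pφ
  have h0 := (((hasDerivAt_const r k0).div (hasDerivAt_rpow_const_of_pos hr (3*(n-1)))
    (by positivity)).mul_const (cos ((n-1)*φ))).mul_const (sin (2*(n-1)*φ))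
  have h1 := (((hasDerivAt_rpow_const_of_pos hr (n-1)).const_mul k1).mul_const
    ((1 / cos ((n-1)*φ)) ^ 3)).mul_const (sin (2*(n-1)*φ))
  have h2 := ((hasDerivAt_const r k2).div
    ((hasDerivAt_rpow_const_of_pos hr (2*(n-1))).const_mul 2) (by positivity)).mul_const
    (cos ((n-1)*φ) ^ 2)
  refine (((hP.sub h0).add h1).sub h2).congr_deriv ?_
  norm_num only [Pi.add_apply, Pi.div_apply]
  field_simp
  ring

theorem hasDerivAt_Jb3_φ (hc : cos ((n-1)*φ) ≠ 0) :
    HasDerivAt (fun x => Jb3 n k0 k1 k2 r x pr pφ)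
      ((n-1) * (r ^ n * (pφ / r * cos ((n-1)*φ) - pr * sin ((n-1)*φ)) * pφ
        + k0 / r ^ (3*(n-1)) * (sin ((n-1)*φ) * sin (2*(n-1)*φ)
            - 2 * cos ((n-1)*φ) * cos (2*(n-1)*φ))
        + k1 * r ^ (n-1) * (3 * sin ((n-1)*φ) * sin (2*(n-1)*φ) / cos ((n-1)*φ) ^ 4
            + 2 * cos (2*(n-1)*φ) / cos ((n-1)*φ) ^ 3)
        + k2 / r ^ (2*(n-1)) * cos ((n-1)*φ) * sin ((n-1)*φ))) φ := by
  have hm : HasDerivAt (fun x => (n-1) * x) (n-1) φ := hasDerivAt_const_mul _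
  have hm2 : HasDerivAt (fun x => 2*(n-1) * x) (2*(n-1)) φ := hasDerivAt_const_mul _
  have hP := (((hm.cos.const_mul pr).add (hm.sin.const_mul (pφ / r))).const_mul
    (r ^ n)).mul_const pφ
  have h0 := (hm.cos.const_mul (k0 / r ^ (3*(n-1)))).mul hm2.sin
  have h1 := ((((hasDerivAt_const φ 1).div hm.cos hc).pow 3).const_mul
    (k1 * r ^ (n-1))).mul hm2.sin
  have h2 := (hm.cos.pow 2).const_mul (k2 / (2 * r ^ (2*(n-1))))
  refine (((hP.sub h0).add h1).sub h2).congr_deriv ?_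
  norm_num only [Pi.pow_apply, Pi.div_apply]
  field_simp
  ring

theorem hasDerivAt_Jb3_pr :
    HasDerivAt (fun x => Jb3 n k0 k1 k2 r φ x pφ) (r ^ n * cos ((n-1)*φ) * pφ) pr := by
  have h := ((((hasDerivAt_id pr).mul_const (cos ((n-1)*φ))).add_const
    (pφ / r * sin ((n-1)*φ))).const_mul (r ^ n)).mul_const pφ
  refine (((h.sub_const _).add_const _).sub_const _).congr_deriv ?_
  simp

theorem hasDerivAt_Jb3_pφ :
    HasDerivAt (fun x => Jb3 n k0 k1 k2 r φ pr x)
      (r ^ n * (pr * cos ((n-1)*φ) + 2 * (pφ / r) * sin ((n-1)*φ))) pφ := by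
  have h := (((((hasDerivAt_id' pφ).div_const r).mul_const (sin ((n-1)*φ))).const_add
    (pr * cos ((n-1)*φ))).const_mul (r ^ n)).mul (hasDerivAt_id' pφ)
  refine (((h.sub_const _).add_const _).sub_const _).congr_deriv ?_
  ring

theorem hasDerivAt_Hnb_r (hr : 0 < r) :
    HasDerivAt (fun x => Hnb n k0 k1 k2 x φ pr pφ)
      (n * r ^ (2*n) / r * (pr ^ 2 + pφ ^ 2 / r ^ 2) - r ^ (2*n) * pφ ^ 2 / r ^ 3
        - 2 * (n-1) * k0 * (cos ((n-1)*φ) ^ 2 + 4 * sin ((n-1)*φ) ^ 2) / (r * r ^ (2*(n-1)))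
        + 2 * (n-1) * k1 * r ^ (2*(n-1)) / (r * cos ((n-1)*φ) ^ 2)
        - (n-1) * k2 * sin ((n-1)*φ) / (r * r ^ (n-1))) r := by
  have hT := ((hasDerivAt_rpow_const_of_pos hr (2*n)).const_mul (1/2)).mul
    (((hasDerivAt_const r (pφ ^ 2)).div (hasDerivAt_pow 2 r) (by positivity)).const_add (pr ^ 2))
  have h0 := ((hasDerivAt_const r k0).div (hasDerivAt_rpow_const_of_pos hr (2*(n-1)))
    (by positivity)).mul_const (cos ((n-1)*φ) ^ 2 + 4 * sin ((n-1)*φ) ^ 2)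
  have h1 := ((hasDerivAt_rpow_const_of_pos hr (2*(n-1))).mul_const k1).div_const
    (cos ((n-1)*φ) ^ 2)
  have h2 := ((hasDerivAt_const r k2).div (hasDerivAt_rpow_const_of_pos hr (n-1))
    (by positivity)).mul_const (sin ((n-1)*φ))
  refine (((hT.add h0).add h1).add h2).congr_deriv ?_
  norm_num only [Pi.pow_apply, Pi.div_apply]
  field_simp
  ring

theorem hasDerivAt_Hnb_φ (hr : 0 < r) (hc : cos ((n-1)*φ) ≠ 0) :
    HasDerivAt (fun x => Hnb n k0 k1 k2 r x pr pφ)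
      ((n-1) * (6 * k0 * sin ((n-1)*φ) * cos ((n-1)*φ) / r ^ (2*(n-1))
        + 2 * k1 * r ^ (2*(n-1)) * sin ((n-1)*φ) / cos ((n-1)*φ) ^ 3
        + k2 * cos ((n-1)*φ) / r ^ (n-1))) φ := by
  have hm : HasDerivAt (fun x => (n-1) * x) (n-1) φ := hasDerivAt_const_mul _
  have h0 := ((hm.cos.pow 2).add ((hm.sin.pow 2).const_mul 4)).const_mul (k0 / r ^ (2*(n-1)))
  have h1 := (hasDerivAt_const φ (r ^ (2*(n-1)) * k1)).div (hm.cos.pow 2) (pow_ne_zero 2 hc)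
  have h2 := hm.sin.const_mul (k2 / r ^ (n-1))
  refine (((h0.const_add (Tkin n r φ pr pφ)).add h1).add h2).congr_deriv ?_
  norm_num only [Pi.pow_apply, Pi.div_apply]
  field_simp
  ring

theorem hasDerivAt_Hnb_pr :
    HasDerivAt (fun x => Hnb n k0 k1 k2 r φ x pφ) (r ^ (2*n) * pr) pr := by
  have h := ((hasDerivAt_pow 2 pr).add_const (pφ ^ 2 / r ^ 2)).const_mul ((1/2) * r ^ (2*n))
  refine (((h.add_const _).add_const _).add_const _).congr_deriv ?_
  ring

theorem hasDerivAt_Hnb_pφ :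
    HasDerivAt (fun x => Hnb n k0 k1 k2 r φ pr x) (r ^ (2*n) * pφ / r ^ 2) pφ := by
  have h := (((hasDerivAt_pow 2 pφ).div_const (r ^ 2)).const_add (pr ^ 2)).const_mul
    ((1/2) * r ^ (2*n))
  refine (((h.add_const _).add_const _).add_const _).congr_deriv ?_
  ring

end PartialDerivatives

/-- J_b3 = P₁ p_φ − (k₀/r^(3k_n)) cos(k_n φ) sin(2k_n φ) + k₁ r^(k_n) sec³(k_n φ) sin(2k_n φ)
    − (k₂/(2r^(2k_n))) cos²(k_n φ) is a constant of motion of H_nb on the open subset of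
Ω = {r > 0} where cos(k_n φ) ≠ 0. -/
theorem Hnb_Jb3_constant (n k0 k1 k2 : ℝ) :
    ∀ r φ pr pφ : ℝ, 0 < r → cos ((n-1)*φ) ≠ 0 →
      pb (fun r φ pr pφ => P1 n r φ pr pφ * pφ
            - (k0 / r ^ (3*(n-1))) * cos ((n-1)*φ) * sin (2*(n-1)*φ)
            + k1 * r ^ (n-1) * (1 / cos ((n-1)*φ))^3 * sin (2*(n-1)*φ)
            - (k2 / (2 * r ^ (2*(n-1)))) * (cos ((n-1)*φ))^2)
         (Hnb n k0 k1 k2) r φ pr pφ = 0 := by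
  intro r φ pr pφ hr hc
  change pb (Jb3 n k0 k1 k2) (Hnb n k0 k1 k2) r φ pr pφ = 0
  rw [pb_eq_of_hasDerivAt (hasDerivAt_Jb3_r hr) (hasDerivAt_Jb3_φ hc) hasDerivAt_Jb3_pr
    hasDerivAt_Jb3_pφ (hasDerivAt_Hnb_r hr) (hasDerivAt_Hnb_φ hr hc) hasDerivAt_Hnb_pr
    hasDerivAt_Hnb_pφ]
  rw [rpow_ofNat_mul hr.le 2 n, rpow_ofNat_mul hr.le 3 (n-1), rpow_ofNat_mul hr.le 2 (n-1),
    rpow_eq_rpow_sub_one_mul hr.ne' n, show 2*(n-1)*φ = 2*((n-1)*φ) by ring, sin_two_mul,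
    cos_two_mul']
  field_simp
  ring
end

section
/- Let n ∈ ℝ, k_n = n − 1, and k₀, k₁, k₂ ∈ ℝ. Consider the Hamiltonian H_na' = T_n + k₀/r^{2k_n} + (1/r^{k_n})(k₁ cos(k_n φ) + k₂ sin(k_n φ)) on Ω = {r > 0}, and let N_φ = cos(2k_n φ) + i sin(2k_n φ). Then {N_φ, H_na'} = 2i λ_n N_φ at every point of Ω, where λ_n = (n − 1) r^{2k_n} p_φ. -/
/-!
`N_φ = exp(2 k_n φ i)` depends on `φ` alone, so the bracket reduces to
`∂_φ N_φ · ∂_{p_φ} H = 2 i k_n N_φ · r^{2 k_n} p_φ`; the potential terms of `H` do not involve `p_φ`.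
-/

open Real

/-- Canonical Poisson bracket, extended to complex-valued functions on the phase
space Ω ⊆ ℝ⁴ with coordinates (r, φ, p_r, p_φ). -/
noncomputable def pbC (F G : ℝ → ℝ → ℝ → ℝ → ℂ) (r φ pr pφ : ℝ) : ℂ :=
  (deriv (fun x => F x φ pr pφ) r) * (deriv (fun x => G r φ x pφ) pr)
    - (deriv (fun x => F r φ x pφ) pr) * (deriv (fun x => G x φ pr pφ) r)
    + (deriv (fun x => F r x pr pφ) φ) * (deriv (fun x => G r φ pr x) pφ)
    - (deriv (fun x => F r φ pr x) pφ) * (deriv (fun x => G r x pr pφ) φ)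

/-- The Hamiltonian H_na' = T_n + k₀/r^(2k_n) + (1/r^(k_n))(k₁ cos(k_n φ) + k₂ sin(k_n φ)),
regarded as a complex-valued function. -/
noncomputable def HnapC (n k0 k1 k2 : ℝ) (r φ pr pφ : ℝ) : ℂ :=
  ((Tkin n r φ pr pφ + k0 / r ^ (2*(n-1))
    + (1 / r ^ (n-1)) * (k1 * cos ((n-1)*φ) + k2 * sin ((n-1)*φ)) : ℝ) : ℂ)

/-- The complex function M_n = M_{n1} + i M_{n2}. -/
noncomputable def Mn (n k0 k1 k2 : ℝ) (r φ pr pφ : ℝ) : ℂ :=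
  ((r ^ (2*(n-1)) * (r^2 * pr^2 - pφ^2) + 2*k0 / r ^ (2*(n-1))
      + (2 / r ^ (n-1)) * (k1 * cos ((n-1)*φ) + k2 * sin ((n-1)*φ)) : ℝ) : ℂ)
    + Complex.I *
    ((2 * r ^ (2*n-1) * pr * pφ
      + (2 / r ^ (n-1)) * (k1 * sin ((n-1)*φ) - k2 * cos ((n-1)*φ)) : ℝ) : ℂ)

/-- The complex function N_φ = cos(2k_n φ) + i sin(2k_n φ). -/
noncomputable def Nphi2 (n : ℝ) (r φ pr pφ : ℝ) : ℂ :=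
  ((cos (2*(n-1)*φ) : ℝ) : ℂ) + Complex.I * ((sin (2*(n-1)*φ) : ℝ) : ℂ)

theorem pbC_of_depends_only_on_angle (f : ℝ → ℂ) (G : ℝ → ℝ → ℝ → ℝ → ℂ) (r φ pr pφ : ℝ) :
    pbC (fun _ x _ _ => f x) G r φ pr pφ = deriv f φ * deriv (fun x => G r φ pr x) pφ := by
  simp [pbC]

theorem Nphi2_eq_exp (n : ℝ) :
    Nphi2 n = fun (_ φ _ _ : ℝ) => Complex.exp (2 * (n - 1) * φ * Complex.I) := by
  funext _ φ _ _
  rw [Nphi2, Complex.exp_mul_I]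
  push_cast
  ring

theorem hasDerivAt_cexp_real_mul_I (c φ : ℝ) :
    HasDerivAt (fun x : ℝ => Complex.exp (c * x * Complex.I))
      (c * Complex.I * Complex.exp (c * φ * Complex.I)) φ := by
  have h : HasDerivAt (fun w : ℂ => c * w * Complex.I) (c * Complex.I) (φ : ℂ) := by
    simpa using ((hasDerivAt_id (φ : ℂ)).const_mul (c : ℂ)).mul_const Complex.I
  simpa [mul_comm] using h.cexp.comp_ofReal

theorem hasDerivAt_Tkin_angularMomentum (n r φ pr pφ : ℝ) :
    HasDerivAt (fun x => Tkin n r φ pr x) (r ^ (2 * n) * pφ / r ^ 2) pφ := by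
  refine ((((hasDerivAt_pow 2 pφ).div_const (r ^ 2)).const_add (pr ^ 2)).const_mul
    ((1 / 2) * r ^ (2 * n))).congr_deriv ?_
  push_cast
  ring

theorem rpow_two_mul_sub_one {r : ℝ} (hr : 0 < r) (n : ℝ) :
    r ^ (2 * (n - 1)) = r ^ (2 * n) / r ^ 2 := by
  rw [show 2 * (n - 1) = 2 * n - 2 by ring, Real.rpow_sub hr, Real.rpow_two]

theorem hasDerivAt_HnapC_angularMomentum (n k0 k1 k2 : ℝ) {r : ℝ} (hr : 0 < r) (φ pr pφ : ℝ) :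
    HasDerivAt (fun x => HnapC n k0 k1 k2 r φ pr x) ((r ^ (2 * (n - 1)) * pφ : ℝ) : ℂ) pφ := by
  have h := ((hasDerivAt_Tkin_angularMomentum n r φ pr pφ).add_const
    (k0 / r ^ (2 * (n - 1))
      + (1 / r ^ (n - 1)) * (k1 * cos ((n - 1) * φ) + k2 * sin ((n - 1) * φ)))).ofReal_comp
  rw [rpow_two_mul_sub_one hr, div_mul_eq_mul_div]
  simpa only [HnapC, add_assoc] using h

/-- {N_φ, H_na'} = 2i λ_n N_φ with λ_n = (n−1) r^(2k_n) p_φ, on Ω = {r > 0}. -/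
theorem Nphi_bracket_Hnap (n k0 k1 k2 : ℝ) :
    ∀ r φ pr pφ : ℝ, 0 < r →
      pbC (Nphi2 n) (HnapC n k0 k1 k2) r φ pr pφ
        = 2 * Complex.I * (((n-1) * r ^ (2*(n-1)) * pφ : ℝ) : ℂ)
            * Nphi2 n r φ pr pφ := by
  intro r φ pr pφ hr
  have hN := hasDerivAt_cexp_real_mul_I (2 * (n - 1)) φ
  push_cast at hN
  rw [Nphi2_eq_exp, pbC_of_depends_only_on_angle, hN.deriv,
    (hasDerivAt_HnapC_angularMomentum n k0 k1 k2 hr φ pr pφ).deriv]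
  push_cast
  ring
end
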